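/- Fix an odd integer d_v ≥ 5 and an integer d_c > d_v, and set m = (d_v − 1)/2. There exist δ ∈ (0, 1/2] and constants 0 < c₁ ≤ c₂, all depending only on d_v and d_c, such that for every p₀ ∈ [0, 1/2] and every p ∈ [0, δ]: c₁·p^m ≤ f_B(p) ≤ c₂·p^m, where f_B is the Gallager-B density-evolution map with parameters (p₀, d_v, d_c). -/
import Mathlib


open Finset

/-- The Gallager-B density-evolution map with channel flip probability `p₀` and
degrees `(d_v, d_c)`, for odd `d_v`. -/
noncomputable def gallagerB (p₀ : ℝ) (d_v d_c : ℕ) (p : ℝ) : ℝ :=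
  p₀ - (p₀ / 2 ^ (d_v - 1)) *
        ∑ j ∈ Finset.Icc ((d_v - 1) / 2) (d_v - 1),
          (Nat.choose (d_v - 1) j : ℝ) * (1 + (1 - 2 * p) ^ (d_c - 1)) ^ j *
            (1 - (1 - 2 * p) ^ (d_c - 1)) ^ (d_v - 1 - j)
     + ((1 - p₀) / 2 ^ (d_v - 1)) *
        ∑ j ∈ Finset.Icc ((d_v - 1) / 2) (d_v - 1),
          (Nat.choose (d_v - 1) j : ℝ) * (1 - (1 - 2 * p) ^ (d_c - 1)) ^ j *
            (1 + (1 - 2 * p) ^ (d_c - 1)) ^ (d_v - 1 - j)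

lemma binom_sum' (m : ℕ) (x : ℝ) :
    ∑ j ∈ Finset.Icc 0 (2*m), (Nat.choose (2*m) j : ℝ) * (1+x)^j * (1-x)^(2*m-j)
      = 2^(2*m) := by
  have h1 : Finset.Icc 0 (2*m) = Finset.range (2*m+1) := by
    rw [← Finset.Ico_add_one_right_eq_Icc, range_eq_Ico]
  rw [h1]
  have h2 := add_pow (1+x) (1-x) (2*m)
  have h3 : (1+x) + (1-x) = 2 := by ring
  rw [h3] at h2
  rw [h2]
  exact Finset.sum_congr rfl fun j _ => by ring

lemma reflect_sum' (m : ℕ) (hm : 1 ≤ m) (x : ℝ) :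
    ∑ j ∈ Finset.Icc 0 (m-1), (Nat.choose (2*m) j : ℝ) * (1+x)^j * (1-x)^(2*m-j)
      = ∑ j ∈ Finset.Icc (m+1) (2*m), (Nat.choose (2*m) j : ℝ) * (1-x)^j * (1+x)^(2*m-j) := by
  apply Finset.sum_nbij' (fun j => 2*m - j) (fun j => 2*m - j)
  · intro a ha; simp only [Finset.mem_Icc] at *; omega
  · intro a ha; simp only [Finset.mem_Icc] at *; omega
  · intro a ha; simp only [Finset.mem_Icc] at *; omega
  · intro a ha; simp only [Finset.mem_Icc] at *; omega
  · intro a ha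
    simp only [Finset.mem_Icc] at ha
    have h1 : 2*m - (2*m - a) = a := by omega
    have h2 : (2*m).choose (2*m - a) = (2*m).choose a := Nat.choose_symm (by omega)
    rw [h1, h2]
    ring

set_option maxHeartbeats 1000000 in
/-- One-step power-law sandwich for Gallager-B density evolution (key estimate in the
proof of Lemma 4). -/
theorem gallagerB_power_law (d_v d_c : ℕ) (hodd : Odd d_v) (hdv : 5 ≤ d_v)
    (hlt : d_v < d_c) (m : ℕ) (hm : m = (d_v - 1) / 2) :
    ∃ δ ∈ Set.Ioc (0 : ℝ) (1 / 2), ∃ c₁ c₂ : ℝ, 0 < c₁ ∧ c₁ ≤ c₂ ∧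
      ∀ p₀ ∈ Set.Icc (0 : ℝ) (1 / 2), ∀ p ∈ Set.Icc (0 : ℝ) δ,
        c₁ * p ^ m ≤ gallagerB p₀ d_v d_c p ∧ gallagerB p₀ d_v d_c p ≤ c₂ * p ^ m := by
  have hn : d_v - 1 = 2*m := by
    obtain ⟨t, ht⟩ := hodd; omega
  have hm2 : 2 ≤ m := by omega
  set k := d_c - 1 with hkdef
  have hk5 : 5 ≤ k := by omega
  have hkR : (5:ℝ) ≤ (k:ℝ) := by exact_mod_cast hk5
  set δ : ℝ := 1/(4*(k:ℝ)) with hδdef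
  have hδpos : 0 < δ := by rw [hδdef]; positivity
  have hδhalf : δ ≤ 1/2 := by
    rw [hδdef, div_le_div_iff₀ (by linarith) (by norm_num)]
    linarith
  set c₁ : ℝ := (Nat.choose (2*m) m : ℝ) * (k:ℝ)^m / 2^(2*m+1) with hc₁
  set c₂ : ℝ := 2^(2*m+1) * (2*(k:ℝ))^m with hc₂
  have hCmpos : (0:ℝ) < (Nat.choose (2*m) m : ℝ) := by
    exact_mod_cast Nat.choose_pos (by omega)
  have hc₁pos : 0 < c₁ := by
    rw [hc₁]
    exact div_pos (mul_pos hCmpos (pow_pos (by linarith) m)) (by positivity)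
  have key : ∀ p₀ ∈ Set.Icc (0:ℝ) (1/2), ∀ p ∈ Set.Icc (0:ℝ) δ,
      c₁ * p^m ≤ gallagerB p₀ d_v d_c p ∧ gallagerB p₀ d_v d_c p ≤ c₂ * p^m := by
    intro p₀ hp₀ p hp
    obtain ⟨hp₀0, hp₀h⟩ := hp₀
    obtain ⟨hp0, hpδ⟩ := hp
    have hp2 : p ≤ 1/2 := hpδ.trans hδhalf
    have hp4k : 4*(k:ℝ)*p ≤ 1 := by
      rw [hδdef, le_div_iff₀ (by linarith)] at hpδ
      linarith
    have hx0 : (0:ℝ) ≤ (1-2*p)^k := pow_nonneg (by linarith) k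
    have hx1 : (1-2*p)^k ≤ 1 := pow_le_one₀ (by linarith) (by linarith)
    -- upper bound on y = 1 - (1-2p)^k
    have hyup : 1 - (1-2*p)^k ≤ 2*(k:ℝ)*p := by
      have h := one_add_mul_le_pow (show (-2:ℝ) ≤ -(2*p) by linarith) k
      rw [show (1 + -(2*p)) = 1-2*p by ring] at h
      linarith
    -- lower bound on y
    have hylow : (k:ℝ)*p ≤ 1 - (1-2*p)^k := by
      have hgeom := geom_sum_mul (1-2*p) k
      have hterm : ∀ i ∈ Finset.range k, (1-2*p)^(k-1) ≤ (1-2*p)^i := by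
        intro i hi
        simp only [Finset.mem_range] at hi
        exact pow_le_pow_of_le_one (by linarith) (by linarith) (by omega)
      have hsumlb := Finset.card_nsmul_le_sum (Finset.range k) (fun i => (1-2*p)^i)
        ((1-2*p)^(k-1)) hterm
      rw [Finset.card_range, nsmul_eq_mul] at hsumlb
      have hber := one_add_mul_le_pow (show (-2:ℝ) ≤ -(2*p) by linarith) (k-1)
      rw [show (1 + -(2*p)) = 1-2*p by ring] at hber
      have hk1 : ((k-1:ℕ):ℝ) = (k:ℝ)-1 := by
        rw [Nat.cast_sub (by omega)]; norm_num
      rw [hk1] at hber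
      have hhalf : (1:ℝ)/2 ≤ (1-2*p)^(k-1) := by nlinarith
      have hS : (k:ℝ)/2 ≤ ∑ i ∈ Finset.range k, (1-2*p)^i := by
        have h2 : (k:ℝ) * (1/2) ≤ (k:ℝ) * (1-2*p)^(k-1) :=
          mul_le_mul_of_nonneg_left hhalf (by linarith)
        linarith
      nlinarith [mul_le_mul_of_nonneg_left hS (show (0:ℝ) ≤ 2*p by linarith)]
    have hy0 : (0:ℝ) ≤ 1 - (1-2*p)^k := by linarith
    have hy1 : 1 - (1-2*p)^k ≤ 1 := by linarith
    -- the structural formula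
    have hsplit : ∀ f : ℕ → ℝ, (∑ j ∈ Finset.Icc 0 (m-1), f j)
        + (∑ j ∈ Finset.Icc m (2*m), f j) = ∑ j ∈ Finset.Icc 0 (2*m), f j := by
      intro f
      have h1 : Finset.Icc 0 (m-1) = Finset.Ico 0 m := by
        rw [← Finset.Ico_add_one_right_eq_Icc]; congr 1; omega
      have h2 : Finset.Icc m (2*m) = Finset.Ico m (2*m+1) := by
        rw [← Finset.Ico_add_one_right_eq_Icc]
      have h3 : Finset.Icc 0 (2*m) = Finset.Ico 0 (2*m+1) := by
        rw [← Finset.Ico_add_one_right_eq_Icc]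
      rw [h1, h2, h3]
      exact Finset.sum_Ico_consecutive f (by omega) (by omega)
    have hbot : ∀ f : ℕ → ℝ, (∑ j ∈ Finset.Icc m (2*m), f j)
        = f m + ∑ j ∈ Finset.Icc (m+1) (2*m), f j := by
      intro f
      have h2 : Finset.Icc m (2*m) = Finset.Ico m (2*m+1) := by
        rw [← Finset.Ico_add_one_right_eq_Icc]
      have h4 : Finset.Icc (m+1) (2*m) = Finset.Ico (m+1) (2*m+1) := by
        rw [← Finset.Ico_add_one_right_eq_Icc]
      rw [h2, h4]
      exact Finset.sum_eq_sum_Ico_succ_bot (by omega) f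
    have hform : gallagerB p₀ d_v d_c p
        = (∑ j ∈ Finset.Icc (m+1) (2*m), (Nat.choose (2*m) j : ℝ)
            * (1 - (1-2*p)^k)^j * (1 + (1-2*p)^k)^(2*m-j)) / 2^(2*m)
          + (1-p₀) * (Nat.choose (2*m) m : ℝ)
            * (1 - (1-2*p)^k)^m * (1 + (1-2*p)^k)^m / 2^(2*m) := by
      simp only [gallagerB, hn, show (2*m)/2 = m from by omega, ← hkdef]
      have e1 := hsplit (fun j => (Nat.choose (2*m) j : ℝ)
        * (1 + (1-2*p)^k)^j * (1 - (1-2*p)^k)^(2*m-j))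
      have e2 := binom_sum' m ((1-2*p)^k)
      have e3 := reflect_sum' m (by omega) ((1-2*p)^k)
      have e4 := hbot (fun j => (Nat.choose (2*m) j : ℝ)
        * (1 - (1-2*p)^k)^j * (1 + (1-2*p)^k)^(2*m-j))
      rw [e2] at e1
      rw [e3] at e1
      have e1' : (∑ j ∈ Finset.Icc m (2*m), (Nat.choose (2*m) j : ℝ)
          * (1 + (1-2*p)^k)^j * (1 - (1-2*p)^k)^(2*m-j))
          = 2^(2*m) - ∑ j ∈ Finset.Icc (m+1) (2*m), (Nat.choose (2*m) j : ℝ)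
            * (1 - (1-2*p)^k)^j * (1 + (1-2*p)^k)^(2*m-j) := by linarith
      rw [e4, show 2*m - m = m from by omega, e1']
      have hD : ((2:ℝ)^(2*m)) ≠ 0 := by positivity
      field_simp
      ring
    have hBnn : (0:ℝ) ≤ ∑ j ∈ Finset.Icc (m+1) (2*m), (Nat.choose (2*m) j : ℝ)
        * (1 - (1-2*p)^k)^j * (1 + (1-2*p)^k)^(2*m-j) := by
      apply Finset.sum_nonneg
      intro j _
      exact mul_nonneg (mul_nonneg (by positivity) (pow_nonneg hy0 _))
        (pow_nonneg (by linarith) _)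
    have hDpos : (0:ℝ) < 2^(2*m) := by positivity
    constructor
    · -- lower bound
      rw [hform]
      have hstep : c₁ * p^m ≤ (1-p₀) * (Nat.choose (2*m) m : ℝ)
          * (1 - (1-2*p)^k)^m * (1 + (1-2*p)^k)^m / 2^(2*m) := by
        calc c₁ * p^m
            = (1/2) * (Nat.choose (2*m) m : ℝ) * ((k:ℝ)*p)^m * 1 / 2^(2*m) := by
              rw [hc₁, mul_pow]; ring
          _ ≤ (1-p₀) * (Nat.choose (2*m) m : ℝ)
              * (1 - (1-2*p)^k)^m * (1 + (1-2*p)^k)^m / 2^(2*m) := by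
              apply div_le_div_of_nonneg_right _ hDpos.le
              have ha : (1:ℝ)/2 * (Nat.choose (2*m) m : ℝ) ≤ (1-p₀) * (Nat.choose (2*m) m : ℝ) :=
                mul_le_mul_of_nonneg_right (by linarith) hCmpos.le
              have hb : ((k:ℝ)*p)^m ≤ (1 - (1-2*p)^k)^m :=
                pow_le_pow_left₀ (by positivity) hylow m
              have hc' : (1:ℝ) ≤ (1 + (1-2*p)^k)^m := one_le_pow₀ (by linarith)
              exact mul_le_mul (mul_le_mul ha hb (by positivity)
                (mul_nonneg (by linarith) hCmpos.le)) hc' (by norm_num)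
                (mul_nonneg (mul_nonneg (by linarith) hCmpos.le) (pow_nonneg hy0 m))
      have hB'div : (0:ℝ) ≤ (∑ j ∈ Finset.Icc (m+1) (2*m), (Nat.choose (2*m) j : ℝ)
          * (1 - (1-2*p)^k)^j * (1 + (1-2*p)^k)^(2*m-j)) / 2^(2*m) :=
        div_nonneg hBnn (le_of_lt hDpos)
      linarith
    · -- upper bound
      rw [hform]
      have hB'up : (∑ j ∈ Finset.Icc (m+1) (2*m), (Nat.choose (2*m) j : ℝ)
          * (1 - (1-2*p)^k)^j * (1 + (1-2*p)^k)^(2*m-j))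
          ≤ 2^(4*m) * (1 - (1-2*p)^k)^m := by
        calc (∑ j ∈ Finset.Icc (m+1) (2*m), (Nat.choose (2*m) j : ℝ)
            * (1 - (1-2*p)^k)^j * (1 + (1-2*p)^k)^(2*m-j))
            ≤ ∑ j ∈ Finset.Icc (m+1) (2*m), (Nat.choose (2*m) j : ℝ)
              * (1 - (1-2*p)^k)^m * 2^(2*m) := by
              apply Finset.sum_le_sum
              intro j hj
              simp only [Finset.mem_Icc] at hj
              have h1 : (1-(1-2*p)^k)^j ≤ (1-(1-2*p)^k)^m :=
                pow_le_pow_of_le_one hy0 hy1 (by omega)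
              have h2 : (1+(1-2*p)^k)^(2*m-j) ≤ 2^(2*m) := by
                calc (1+(1-2*p)^k)^(2*m-j) ≤ 2^(2*m-j) :=
                      pow_le_pow_left₀ (by linarith) (by linarith) _
                  _ ≤ 2^(2*m) := pow_le_pow_right₀ (by norm_num) (by omega)
              have hc : (0:ℝ) ≤ (Nat.choose (2*m) j : ℝ) := by positivity
              exact mul_le_mul (mul_le_mul_of_nonneg_left h1 hc) h2
                (pow_nonneg (by linarith) _) (mul_nonneg hc (pow_nonneg hy0 m))
          _ = (∑ j ∈ Finset.Icc (m+1) (2*m), (Nat.choose (2*m) j : ℝ))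
              * ((1-(1-2*p)^k)^m * 2^(2*m)) := by
              rw [Finset.sum_mul]
              exact Finset.sum_congr rfl fun j _ => by ring
          _ ≤ (2^(2*m) : ℝ) * ((1-(1-2*p)^k)^m * 2^(2*m)) := by
              apply mul_le_mul_of_nonneg_right
              · have hnat : (∑ j ∈ Finset.Icc (m+1) (2*m), Nat.choose (2*m) j) ≤ 2^(2*m) := by
                  calc (∑ j ∈ Finset.Icc (m+1) (2*m), Nat.choose (2*m) j)
                      ≤ ∑ j ∈ Finset.range (2*m+1), Nat.choose (2*m) j :=
                        Finset.sum_le_sum_of_subset (fun a ha => by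
                          simp only [Finset.mem_Icc, Finset.mem_range] at *; omega)
                    _ = 2^(2*m) := Nat.sum_range_choose (2*m)
                calc (∑ j ∈ Finset.Icc (m+1) (2*m), (Nat.choose (2*m) j : ℝ))
                    = ((∑ j ∈ Finset.Icc (m+1) (2*m), Nat.choose (2*m) j : ℕ) : ℝ) := by
                      push_cast; ring
                  _ ≤ (((2:ℕ)^(2*m) : ℕ) : ℝ) := by exact_mod_cast hnat
                  _ = 2^(2*m) := by push_cast; ring
              · exact mul_nonneg (pow_nonneg hy0 m) (by positivity)
          _ = 2^(4*m) * (1-(1-2*p)^k)^m := by ring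
      have hCm : (Nat.choose (2*m) m : ℝ) ≤ 2^(2*m) := by
        have hnat : Nat.choose (2*m) m ≤ 2^(2*m) := by
          calc Nat.choose (2*m) m ≤ ∑ j ∈ Finset.range (2*m+1), Nat.choose (2*m) j :=
                Finset.single_le_sum (fun i _ => Nat.zero_le _)
                  (by simp only [Finset.mem_range]; omega)
            _ = 2^(2*m) := Nat.sum_range_choose (2*m)
        exact_mod_cast hnat
      have h2m : (1+(1-2*p)^k)^m ≤ (2:ℝ)^(2*m) := by
        calc (1+(1-2*p)^k)^m ≤ 2^m := pow_le_pow_left₀ (by linarith) (by linarith) _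
          _ ≤ (2:ℝ)^(2*m) := pow_le_pow_right₀ (by norm_num) (by omega)
      have h1 : (∑ j ∈ Finset.Icc (m+1) (2*m), (Nat.choose (2*m) j : ℝ)
          * (1 - (1-2*p)^k)^j * (1 + (1-2*p)^k)^(2*m-j)) / 2^(2*m)
          ≤ 2^(2*m) * (1-(1-2*p)^k)^m := by
        rw [div_le_iff₀ hDpos]
        calc (∑ j ∈ Finset.Icc (m+1) (2*m), (Nat.choose (2*m) j : ℝ)
            * (1 - (1-2*p)^k)^j * (1 + (1-2*p)^k)^(2*m-j))
            ≤ 2^(4*m) * (1-(1-2*p)^k)^m := hB'up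
          _ = 2^(2*m) * (1-(1-2*p)^k)^m * 2^(2*m) := by ring
      have hT : (1-p₀) * (Nat.choose (2*m) m : ℝ)
          * (1 - (1-2*p)^k)^m * (1 + (1-2*p)^k)^m / 2^(2*m)
          ≤ 2^(2*m) * (1-(1-2*p)^k)^m := by
        calc (1-p₀) * (Nat.choose (2*m) m : ℝ)
            * (1 - (1-2*p)^k)^m * (1 + (1-2*p)^k)^m / 2^(2*m)
            ≤ 1 * 2^(2*m) * (1 - (1-2*p)^k)^m * 2^(2*m) / 2^(2*m) := by
              apply div_le_div_of_nonneg_right _ hDpos.le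
              have ha : (1-p₀) * (Nat.choose (2*m) m : ℝ) ≤ 1 * 2^(2*m) :=
                mul_le_mul (by linarith) hCm hCmpos.le (by norm_num)
              exact mul_le_mul (mul_le_mul ha le_rfl (pow_nonneg hy0 m) (by positivity))
                h2m (pow_nonneg (by linarith) m)
                (mul_nonneg (by positivity) (pow_nonneg hy0 m))
          _ = 2^(2*m) * (1-(1-2*p)^k)^m := by
              rw [div_eq_iff (ne_of_gt hDpos)]; ring
      have hYb : (1-(1-2*p)^k)^m ≤ (2*(k:ℝ)*p)^m :=
        pow_le_pow_left₀ hy0 hyup m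
      calc (∑ j ∈ Finset.Icc (m+1) (2*m), (Nat.choose (2*m) j : ℝ)
          * (1 - (1-2*p)^k)^j * (1 + (1-2*p)^k)^(2*m-j)) / 2^(2*m)
          + (1-p₀) * (Nat.choose (2*m) m : ℝ)
            * (1 - (1-2*p)^k)^m * (1 + (1-2*p)^k)^m / 2^(2*m)
          ≤ 2^(2*m) * (1-(1-2*p)^k)^m + 2^(2*m) * (1-(1-2*p)^k)^m := add_le_add h1 hT
        _ = 2^(2*m+1) * (1-(1-2*p)^k)^m := by ring
        _ ≤ 2^(2*m+1) * (2*(k:ℝ)*p)^m := by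
            exact mul_le_mul_of_nonneg_left hYb (by positivity)
        _ = c₂ * p^m := by rw [hc₂, mul_pow]; ring
  refine ⟨δ, ⟨hδpos, hδhalf⟩, c₁, c₂, hc₁pos, ?_, key⟩
  obtain ⟨h1, h2⟩ := key 0 ⟨le_refl 0, by norm_num⟩ δ ⟨le_of_lt hδpos, le_refl δ⟩
  exact le_of_mul_le_mul_right (h1.trans h2) (pow_pos hδpos m)
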